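/- arXiv:2503.20703 — 2 statements merged into one kernel-verified Lean document; each statement's English description precedes it below -/
import Mathlib

section
/- Consider the SLS achievability affine constraint [I − ZA, −ZB]·[Φ_x; Φ_u] = E for block-lower-triangular matrices Φ_x, Φ_u, where Z is the block downshift operator and A, B, E are block-diagonal. If Φ_x, Φ_u are block-lower-triangular and satisfy this equation, then Φ_x is invertible and the controller K = Φ_u Φ_x⁻¹ achieves the closed-loop maps x = Φ_x w and u = Φ_u w for the system x = ZAx + ZBu + Ew; conversely, for any block-lower-triangular K, the induced maps Φ_x = (I − Z(A+BK))⁻¹E and Φ_u = KΦ_x satisfy the affine constraint. -/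
open Matrix

variable {N a b : ℕ}

/-- A matrix indexed by (block, inner) pairs is block-lower-triangular. -/
def BlockLowerTri (M : Matrix (Fin N × Fin a) (Fin N × Fin b) ℝ) : Prop :=
  ∀ i j, i.1 < j.1 → M i j = 0

/-- A matrix indexed by (block, inner) pairs is block-diagonal. -/
def BlockDiagonal' (M : Matrix (Fin N × Fin a) (Fin N × Fin b) ℝ) : Prop :=
  ∀ i j, i.1 ≠ j.1 → M i j = 0

/-- The block downshift operator: identity blocks on the first block
sub-diagonal and zeros elsewhere. -/
def downshift (N d : ℕ) : Matrix (Fin N × Fin d) (Fin N × Fin d) ℝ :=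
  fun i j => if (i.1 : ℕ) = (j.1 : ℕ) + 1 ∧ i.2 = j.2 then 1 else 0

/-- strictly block lower triangular -/
def SBL {N a : ℕ} (S : Matrix (Fin N × Fin a) (Fin N × Fin a) ℝ) : Prop :=
  ∀ i j, (i.1 : ℕ) ≤ (j.1 : ℕ) → S i j = 0

lemma sbl_pow {N a : ℕ} {S : Matrix (Fin N × Fin a) (Fin N × Fin a) ℝ} (hS : SBL S) :
    ∀ k, ∀ i j, (i.1 : ℕ) < (j.1 : ℕ) + k → (S ^ k) i j = 0 := by
  intro k
  induction k with
  | zero =>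
    intro i j h
    have : i ≠ j := by
      rintro rfl; omega
    simp [Matrix.one_apply_ne this]
  | succ k ih =>
    intro i j h
    rw [pow_succ', Matrix.mul_apply]
    apply Finset.sum_eq_zero
    intro l _
    rcases le_or_gt (i.1 : ℕ) (l.1 : ℕ) with hle | hlt
    · rw [hS i l hle, zero_mul]
    · rw [ih l j (by omega), mul_zero]

lemma sbl_nilpotent {N a : ℕ} {S : Matrix (Fin N × Fin a) (Fin N × Fin a) ℝ} (hS : SBL S) :
    IsNilpotent S := by
  refine ⟨N, ?_⟩
  ext i j
  rw [sbl_pow hS N i j (by omega)]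
  rfl

lemma downshift_mul_sbl {N d : ℕ} {X : Matrix (Fin N × Fin d) (Fin N × Fin d) ℝ}
    (hX : BlockLowerTri X) : SBL (downshift N d * X) := by
  intro i j hij
  rw [Matrix.mul_apply]
  apply Finset.sum_eq_zero
  intro l _
  by_cases h : (i.1 : ℕ) = (l.1 : ℕ) + 1 ∧ i.2 = l.2
  · obtain ⟨h1, -⟩ := h
    rw [hX l j (Fin.lt_def.mpr (by omega)), mul_zero]
  · simp [downshift, h]

lemma blt_mul {N a b c : ℕ} {X : Matrix (Fin N × Fin a) (Fin N × Fin b) ℝ}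
    {Y : Matrix (Fin N × Fin b) (Fin N × Fin c) ℝ}
    (hX : BlockLowerTri X) (hY : BlockLowerTri Y) : BlockLowerTri (X * Y) := by
  intro i j hij
  rw [Matrix.mul_apply]
  apply Finset.sum_eq_zero
  intro l _
  rcases lt_or_ge i.1 l.1 with h | h
  · rw [hX i l h, zero_mul]
  · rw [hY l j (lt_of_le_of_lt h hij), mul_zero]

lemma bd_blt {N a b : ℕ} {X : Matrix (Fin N × Fin a) (Fin N × Fin b) ℝ}
    (hX : BlockDiagonal' X) : BlockLowerTri X :=
  fun i j hij => hX i j (ne_of_lt hij)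

lemma blt_add {N a b : ℕ} {X Y : Matrix (Fin N × Fin a) (Fin N × Fin b) ℝ}
    (hX : BlockLowerTri X) (hY : BlockLowerTri Y) : BlockLowerTri (X + Y) := by
  intro i j hij
  simp [Matrix.add_apply, hX i j hij, hY i j hij]

lemma blt_blockTriangular {N d : ℕ} {M : Matrix (Fin N × Fin d) (Fin N × Fin d) ℝ}
    (hM : BlockLowerTri M) :
    Matrix.BlockTriangular M (fun i => OrderDual.toDual i.1) := fun i j h => hM i j h

lemma det_eq_det {N d : ℕ} {X Y : Matrix (Fin N × Fin d) (Fin N × Fin d) ℝ}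
    (hX : BlockLowerTri X) (hY : BlockLowerTri Y)
    (hdiag : ∀ i j, i.1 = j.1 → X i j = Y i j) : X.det = Y.det := by
  rw [(blt_blockTriangular hX).det_fintype, (blt_blockTriangular hY).det_fintype]
  refine Finset.prod_congr rfl fun k _ => ?_
  congr 1
  ext i j
  have hi := i.2
  have hj := j.2
  exact hdiag i.1 j.1 (by
    have : OrderDual.toDual i.1.1 = OrderDual.toDual j.1.1 := hi.trans hj.symm
    exact OrderDual.toDual_inj.mp this)

/-- System level synthesis parametrization: block-lower-triangular `Φx, Φu`
satisfying the achievability constraint `[I − ZA, −ZB]·[Φx; Φu] = E` are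
exactly the closed-loop maps induced by block-lower-triangular controllers
`K = Φu Φx⁻¹` (with `Φx` invertible), i.e. `Φx = (I − Z(A+BK))⁻¹E` and
`Φu = KΦx`; conversely every block-lower-triangular `K` induces maps
satisfying the constraint. -/
theorem sls_parametrization
    {N d m : ℕ}
    (A E : Matrix (Fin N × Fin d) (Fin N × Fin d) ℝ)
    (B : Matrix (Fin N × Fin d) (Fin N × Fin m) ℝ)
    (hA : BlockDiagonal' A) (hB : BlockDiagonal' B) (hE : BlockDiagonal' E)
    (hEunit : IsUnit E) :
    (∀ (Φx : Matrix (Fin N × Fin d) (Fin N × Fin d) ℝ)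
        (Φu : Matrix (Fin N × Fin m) (Fin N × Fin d) ℝ),
      BlockLowerTri Φx → BlockLowerTri Φu →
      (1 - downshift N d * A) * Φx - (downshift N d * B) * Φu = E →
      IsUnit Φx ∧
        Φx = (1 - downshift N d * (A + B * (Φu * Φx⁻¹)))⁻¹ * E ∧
        Φu = (Φu * Φx⁻¹) * Φx) ∧
    (∀ K : Matrix (Fin N × Fin m) (Fin N × Fin d) ℝ, BlockLowerTri K →
      (1 - downshift N d * A) * ((1 - downshift N d * (A + B * K))⁻¹ * E) -
        (downshift N d * B) * (K * ((1 - downshift N d * (A + B * K))⁻¹ * E)) = E) := by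
  have hEdet : IsUnit E.det := (Matrix.isUnit_iff_isUnit_det E).mp hEunit
  constructor
  · intro Φx Φu hΦx hΦu hconstraint
    have hcon' : Φx - downshift N d * A * Φx - downshift N d * B * Φu = E := by
      rw [← hconstraint, sub_mul, one_mul]
    -- Φx = E + S with S strictly block lower
    have hS : SBL (downshift N d * A * Φx + downshift N d * B * Φu) := by
      intro i j hij
      have h1 := downshift_mul_sbl (blt_mul (bd_blt hA) hΦx) i j hij
      have h2 := downshift_mul_sbl (blt_mul (bd_blt hB) hΦu) i j hij
      rw [← Matrix.mul_assoc] at h1 h2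
      simp [Matrix.add_apply, h1, h2]
    have hΦxE : Φx = E + (downshift N d * A * Φx + downshift N d * B * Φu) := by
      rw [sub_sub] at hcon'
      exact sub_eq_iff_eq_add.mp hcon'
    -- determinant of Φx equals determinant of E
    have hdet : Φx.det = E.det := by
      apply det_eq_det hΦx (bd_blt hE)
      intro i j hij
      rw [hΦxE, Matrix.add_apply, hS i j (le_of_eq (congrArg Fin.val hij)), add_zero]
    have hΦxdet : IsUnit Φx.det := hdet ▸ hEdet
    have hΦxunit : IsUnit Φx := (Matrix.isUnit_iff_isUnit_det Φx).mpr hΦxdet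
    refine ⟨hΦxunit, ?_, ?_⟩
    · set K := Φu * Φx⁻¹ with hK
      have hKΦ : K * Φx = Φu := by
        rw [hK, Matrix.mul_assoc, Matrix.nonsing_inv_mul Φx hΦxdet, Matrix.mul_one]
      set M := 1 - downshift N d * (A + B * K) with hM
      have hMΦ : M * Φx = E := by
        rw [hM, sub_mul, one_mul, Matrix.mul_add, add_mul, sub_add_eq_sub_sub,
          ← Matrix.mul_assoc (downshift N d) B K, Matrix.mul_assoc (downshift N d * B) K Φx,
          hKΦ]
        exact hcon'
      have hMdet : IsUnit M.det := by
        have hmul : M.det * Φx.det = E.det := by rw [← Matrix.det_mul, hMΦ]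
        exact isUnit_of_mul_isUnit_left (hmul ▸ hEdet)
      calc Φx = 1 * Φx := (Matrix.one_mul Φx).symm
        _ = (M⁻¹ * M) * Φx := by rw [Matrix.nonsing_inv_mul M hMdet]
        _ = M⁻¹ * (M * Φx) := Matrix.mul_assoc _ _ _
        _ = M⁻¹ * E := by rw [hMΦ]
    · rw [Matrix.mul_assoc, Matrix.nonsing_inv_mul Φx hΦxdet, Matrix.mul_one]
  · intro K hK
    set M := 1 - downshift N d * (A + B * K) with hM
    have hMunit : IsUnit M := by
      apply IsNilpotent.isUnit_one_sub
      exact sbl_nilpotent (downshift_mul_sbl (blt_add (bd_blt hA) (blt_mul (bd_blt hB) hK)))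
    have hMdet : IsUnit M.det := (Matrix.isUnit_iff_isUnit_det M).mp hMunit
    have hMP : M * (M⁻¹ * E) = E := by
      rw [← Matrix.mul_assoc, Matrix.mul_nonsing_inv M hMdet, Matrix.one_mul]
    have expand : M * (M⁻¹ * E) =
        (M⁻¹ * E) - downshift N d * A * (M⁻¹ * E) -
          downshift N d * B * (K * (M⁻¹ * E)) := by
      rw [hM, sub_mul, one_mul, Matrix.mul_add, add_mul, sub_add_eq_sub_sub,
        ← Matrix.mul_assoc (downshift N d) B K,
        Matrix.mul_assoc (downshift N d * B) K]
    rw [sub_mul, one_mul, ← expand]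
    exact hMP
end

section
/- Under the Gaussian reference measure ν = N(m, Σ) on ℝ^s and squared Euclidean transport cost c(x,y) = ‖x−y‖², with empirical center P̂_n = (1/n)Σᵢ δ_{ξ̂ᵢ}, the feasibility condition ρ + ε·E_{ξ∼P̂_n}[log E_{z∼ν}[e^{−‖ξ−z‖²/ε}]] ≥ 0 is equivalent to ρ ≥ (ε/2)·log det(Σ + (ε/2)I) − (εs/2)·log(ε/2) + (ε/2)‖m‖²_{Σ⁻¹} + (1/n)Σᵢ [ ‖ξ̂ᵢ‖² − (ξ̂ᵢ + (ε/2)Σ⁻¹m)ᵀ (I + (ε/2)Σ⁻¹)⁻¹ (ξ̂ᵢ + (ε/2)Σ⁻¹m) ]. -/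
open MeasureTheory Matrix Real

/-!
Multiplying the kernel `exp (-‖ξ - z‖² / ε)` by the density of `N(m, Σ)` gives an unnormalised
Gaussian in `z`: completing the square, its precision is `A = Σ⁻¹ + (2/ε) I = (2/ε) (I + (ε/2) Σ⁻¹)`
and its linear term is `(2/ε) (ξ + (ε/2) Σ⁻¹ m)`. The Gaussian integral
`∫ exp (-½ zᵀ A z + bᵀ z) = √((2π)ˢ / det A) · exp (½ bᵀ A⁻¹ b)` (from the standard one by the
substitution `z ↦ A^{1/2} z`) and `det Σ · det A = (2/ε)ˢ det (Σ + (ε/2) I)` make the logarithm of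
the inner expectation explicit, and averaging over the `ξ̂ᵢ` turns the feasibility condition into a
linear inequality in `ρ`.
-/

section QuadraticForm

variable {ι R : Type*} [Fintype ι]

theorem Matrix.IsSymm.dotProduct_mulVec_comm [CommSemiring R] {A : Matrix ι ι R} (hA : A.IsSymm)
    (x y : ι → R) : x ⬝ᵥ A *ᵥ y = y ⬝ᵥ A *ᵥ x := by
  rw [dotProduct_mulVec, ← mulVec_transpose, hA.eq, dotProduct_comm]

theorem Matrix.IsSymm.dotProduct_sub_mulVec_sub [CommRing R] {A : Matrix ι ι R} (hA : A.IsSymm)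
    (x y : ι → R) :
    (x - y) ⬝ᵥ A *ᵥ (x - y) = x ⬝ᵥ A *ᵥ x - 2 * (x ⬝ᵥ A *ᵥ y) + y ⬝ᵥ A *ᵥ y := by
  rw [mulVec_sub, sub_dotProduct, dotProduct_sub, dotProduct_sub, hA.dotProduct_mulVec_comm y x]
  ring

end QuadraticForm

section GaussianIntegral

variable {ι : Type*} [Fintype ι]

theorem integral_exp_neg_half_dotProduct_self :
    ∫ u : ι → ℝ, exp (-(1 / 2) * (u ⬝ᵥ u)) = √((2 * π) ^ Fintype.card ι) := by
  have hprod (u : ι → ℝ) : exp (-(1 / 2) * (u ⬝ᵥ u)) = ∏ i, exp (-(1 / 2) * u i ^ 2) := by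
    simp only [← exp_sum, dotProduct, Finset.mul_sum, sq]
  have hgauss : ∫ x : ℝ, exp (-(1 / 2) * x ^ 2) = √(2 * π) := by
    rw [integral_gaussian]
    ring_nf
  simp_rw [hprod]
  rw [integral_fintype_prod_volume_eq_prod (fun _ x => exp (-(1 / 2) * x ^ 2)), hgauss,
    ← sqrt_prod _ fun _ _ => by positivity, Finset.prod_const, Finset.card_univ]

variable [DecidableEq ι]

theorem integral_comp_mulVec {E : Type*} [NormedAddCommGroup E] [NormedSpace ℝ E]
    {B : Matrix ι ι ℝ} (hB : B.det ≠ 0) (f : (ι → ℝ) → E) :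
    ∫ z, f (B *ᵥ z) = |B.det|⁻¹ • ∫ u, f u := by
  let := B.invertibleOfIsUnitDet hB.isUnit
  have hemb : MeasurableEmbedding (toLin' B) :=
    (B.toLinearEquiv' ‹_›).toContinuousLinearEquiv.toHomeomorph.measurableEmbedding
  calc ∫ z, f (B *ᵥ z) = ∫ u, f u ∂(Measure.map (toLin' B) volume) := (hemb.integral_map f).symm
    _ = |B.det|⁻¹ • ∫ u, f u := by
      rw [map_matrix_volume_pi_eq_smul_volume_pi hB, integral_smul_measure,
        ENNReal.toReal_ofReal (abs_nonneg _), abs_inv]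

open scoped MatrixOrder in
theorem integral_exp_neg_half_dotProduct_mulVec {A : Matrix ι ι ℝ} (hA : A.PosDef) :
    ∫ z, exp (-(1 / 2) * (z ⬝ᵥ A *ᵥ z)) = √((2 * π) ^ Fintype.card ι / A.det) := by
  set B := CFC.sqrt A
  have hBB : B * B = A := CFC.sqrt_mul_sqrt_self A (nonneg_iff_posSemidef.2 hA.posSemidef)
  have hBsymm : B.IsSymm :=
    isHermitian_iff_isSymm.1 (nonneg_iff_posSemidef.1 (CFC.sqrt_nonneg A)).isHermitian
  have hdet : B.det ^ 2 = A.det := by rw [sq, ← det_mul, hBB]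
  have hBdet : B.det ≠ 0 := fun h => hA.det_pos.ne' (by rw [← hdet, h, sq, zero_mul])
  have hquad (z : ι → ℝ) : z ⬝ᵥ A *ᵥ z = B *ᵥ z ⬝ᵥ B *ᵥ z := by
    rw [← hBB, ← mulVec_mulVec, dotProduct_mulVec, ← mulVec_transpose, hBsymm.eq]
  simp_rw [hquad]
  rw [integral_comp_mulVec hBdet fun u => exp (-(1 / 2) * (u ⬝ᵥ u)),
    integral_exp_neg_half_dotProduct_self, ← hdet, sqrt_div' _ (sq_nonneg _), sqrt_sq_eq_abs,
    smul_eq_mul, inv_mul_eq_div]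

theorem integral_exp_neg_half_dotProduct_mulVec_add_dotProduct {A : Matrix ι ι ℝ}
    (hA : A.PosDef) (b : ι → ℝ) :
    ∫ z, exp (-(1 / 2) * (z ⬝ᵥ A *ᵥ z) + z ⬝ᵥ b)
      = √((2 * π) ^ Fintype.card ι / A.det) * exp (1 / 2 * (b ⬝ᵥ A⁻¹ *ᵥ b)) := by
  set μ := A⁻¹ *ᵥ b
  have hAμ : A *ᵥ μ = b := by
    rw [mulVec_mulVec, mul_nonsing_inv _ hA.det_pos.ne'.isUnit, one_mulVec]
  have hsq (z : ι → ℝ) : -(1 / 2) * (z ⬝ᵥ A *ᵥ z) + z ⬝ᵥ b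
      = 1 / 2 * (b ⬝ᵥ μ) + -(1 / 2) * ((z - μ) ⬝ᵥ A *ᵥ (z - μ)) := by
    rw [(isHermitian_iff_isSymm.1 hA.isHermitian).dotProduct_sub_mulVec_sub, hAμ,
      dotProduct_comm μ b]
    ring
  simp_rw [hsq, exp_add]
  rw [integral_const_mul,
    integral_sub_right_eq_self (fun w => exp (-(1 / 2) * (w ⬝ᵥ A *ᵥ w))) μ,
    integral_exp_neg_half_dotProduct_mulVec hA, mul_comm]


theorem integral_exp_neg_sqDist_div_mul_gaussianDensity {S : Matrix ι ι ℝ} (hS : S.PosDef)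
    (m : ι → ℝ) {ε : ℝ} (hε : 0 < ε) (x : ι → ℝ) :
    ∫ z, exp (-((x - z) ⬝ᵥ (x - z)) / ε) *
        ((√((2 * π) ^ Fintype.card ι * S.det))⁻¹ *
          exp (-(1 / 2) * ((z - m) ⬝ᵥ S⁻¹ *ᵥ (z - m))))
      = √((ε / 2) ^ Fintype.card ι / (S + (ε / 2) • 1).det) *
        exp (1 / ε * ((x + (ε / 2) • S⁻¹ *ᵥ m) ⬝ᵥ (1 + (ε / 2) • S⁻¹)⁻¹ *ᵥ
          (x + (ε / 2) • S⁻¹ *ᵥ m) - x ⬝ᵥ x - ε / 2 * (m ⬝ᵥ S⁻¹ *ᵥ m))) := by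
  set P := S⁻¹
  set M : Matrix ι ι ℝ := 1 + (ε / 2) • P
  set v := x + (ε / 2) • P *ᵥ m
  set C := (√((2 * π) ^ Fintype.card ι * S.det))⁻¹
  have hP : P.IsSymm := isHermitian_iff_isSymm.1 hS.inv.isHermitian
  have hM : M.PosDef := PosDef.one.add_posSemidef (hS.inv.posSemidef.smul (by positivity))
  have hA : ((2 / ε) • M).PosDef := hM.smul (by positivity)
  have hAinv : ((2 / ε) • M)⁻¹ = (ε / 2) • M⁻¹ := by
    refine inv_eq_left_inv ?_
    rw [smul_mul_smul, nonsing_inv_mul _ hM.det_pos.ne'.isUnit, show ε / 2 * (2 / ε) = 1 by field_simp, one_smul]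
  have hexp (z : ι → ℝ) : -((x - z) ⬝ᵥ (x - z)) / ε + -(1 / 2) * ((z - m) ⬝ᵥ P *ᵥ (z - m))
      = (-(1 / ε) * (x ⬝ᵥ x) - 1 / 2 * (m ⬝ᵥ P *ᵥ m)) +
        (-(1 / 2) * (z ⬝ᵥ ((2 / ε) • M) *ᵥ z) + z ⬝ᵥ (2 / ε) • v) := by
    rw [hP.dotProduct_sub_mulVec_sub]
    simp only [M, v, smul_mulVec, add_mulVec, one_mulVec, dotProduct_add, dotProduct_smul,
      smul_eq_mul, sub_dotProduct, dotProduct_sub, dotProduct_comm x z]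
    field_simp
    ring
  have hintegrand (z : ι → ℝ) :
      exp (-((x - z) ⬝ᵥ (x - z)) / ε) * (C * exp (-(1 / 2) * ((z - m) ⬝ᵥ P *ᵥ (z - m))))
        = C * exp (-(1 / ε) * (x ⬝ᵥ x) - 1 / 2 * (m ⬝ᵥ P *ᵥ m)) *
          exp (-(1 / 2) * (z ⬝ᵥ ((2 / ε) • M) *ᵥ z) + z ⬝ᵥ (2 / ε) • v) := by
    rw [mul_left_comm, ← exp_add, hexp, exp_add, mul_assoc]
  have hdet : S.det * M.det = (S + (ε / 2) • 1).det := by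
    rw [← det_mul, mul_add, mul_one, Matrix.mul_smul, mul_nonsing_inv _ hS.det_pos.ne'.isUnit]
  have hconst : C * √((2 * π) ^ Fintype.card ι / ((2 / ε) • M).det)
      = √((ε / 2) ^ Fintype.card ι / (S + (ε / 2) • 1).det) := by
    simp only [C]
    rw [← sqrt_inv, ← sqrt_mul' _ (by have := hA.det_pos; positivity), det_smul, ← hdet]
    congr 1
    have := hS.det_pos
    have := hM.det_pos
    field_simp
    rw [← mul_pow, show 2 / ε * (ε / 2) = 1 by field_simp, one_pow]
  simp_rw [hintegrand]
  rw [integral_const_mul, integral_exp_neg_half_dotProduct_mulVec_add_dotProduct hA, hAinv]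
  have hexponent : -(1 / ε) * (x ⬝ᵥ x) - 1 / 2 * (m ⬝ᵥ P *ᵥ m) +
      1 / 2 * ((2 / ε) • v ⬝ᵥ ((ε / 2) • M⁻¹) *ᵥ (2 / ε) • v)
        = 1 / ε * (v ⬝ᵥ M⁻¹ *ᵥ v - x ⬝ᵥ x - ε / 2 * (m ⬝ᵥ P *ᵥ m)) := by
    simp only [smul_mulVec, mulVec_smul, dotProduct_smul, smul_dotProduct, smul_eq_mul]
    field_simp
    ring
  rw [← hconst, ← hexponent, exp_add]
  ring


theorem log_integral_exp_neg_sqDist_div_mul_gaussianDensity {S : Matrix ι ι ℝ} (hS : S.PosDef)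
    (m : ι → ℝ) {ε : ℝ} (hε : 0 < ε) (x : ι → ℝ) :
    log (∫ z, exp (-((x - z) ⬝ᵥ (x - z)) / ε) *
        ((√((2 * π) ^ Fintype.card ι * S.det))⁻¹ *
          exp (-(1 / 2) * ((z - m) ⬝ᵥ S⁻¹ *ᵥ (z - m)))))
      = Fintype.card ι / 2 * log (ε / 2) - 1 / 2 * log (S + (ε / 2) • 1).det +
        1 / ε * ((x + (ε / 2) • S⁻¹ *ᵥ m) ⬝ᵥ (1 + (ε / 2) • S⁻¹)⁻¹ *ᵥ
          (x + (ε / 2) • S⁻¹ *ᵥ m) - x ⬝ᵥ x - ε / 2 * (m ⬝ᵥ S⁻¹ *ᵥ m)) := by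
  have hD : 0 < (S + (ε / 2) • (1 : Matrix ι ι ℝ)).det :=
    (hS.add_posSemidef (PosSemidef.one.smul (by positivity))).det_pos
  rw [integral_exp_neg_sqDist_div_mul_gaussianDensity hS m hε,
    log_mul (by positivity) (exp_pos _).ne', log_exp, log_sqrt (by positivity),
    log_div (by positivity) hD.ne', log_pow]
  ring

end GaussianIntegral

theorem sinkhorn_feasibility_condition_general
    {s : ℕ} (S : Matrix (Fin s) (Fin s) ℝ) (hS : S.PosDef)
    (m : Fin s → ℝ) (ε : ℝ) (hε : 0 < ε) (ρ : ℝ)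
    (n : ℕ) (hn : 0 < n) (ξ : Fin n → Fin s → ℝ) :
    (0 ≤ ρ + ε * ((n : ℝ)⁻¹ * ∑ i : Fin n, Real.log
        (∫ z : Fin s → ℝ,
          Real.exp (-((ξ i - z) ⬝ᵥ (ξ i - z)) / ε) *
            ((Real.sqrt ((2 * π) ^ s * S.det))⁻¹ *
              Real.exp (-(1/2) * ((z - m) ⬝ᵥ S⁻¹.mulVec (z - m))))))) ↔
    ((ε / 2) * Real.log ((S + (ε / 2) • (1 : Matrix (Fin s) (Fin s) ℝ)).det)
        - (ε * s / 2) * Real.log (ε / 2)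
        + (ε / 2) * (m ⬝ᵥ S⁻¹.mulVec m)
        + (n : ℝ)⁻¹ * ∑ i : Fin n,
            ((ξ i ⬝ᵥ ξ i) -
              (ξ i + (ε / 2) • S⁻¹.mulVec m) ⬝ᵥ
                (((1 : Matrix (Fin s) (Fin s) ℝ) + (ε / 2) • S⁻¹)⁻¹).mulVec
                  (ξ i + (ε / 2) • S⁻¹.mulVec m))
      ≤ ρ) := by
  have hlog := log_integral_exp_neg_sqDist_div_mul_gaussianDensity hS m hε
  simp only [Fintype.card_fin] at hlog
  simp only [hlog, Finset.sum_add_distrib, Finset.sum_sub_distrib, ← Finset.mul_sum,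
    Finset.sum_const, Finset.card_univ, Fintype.card_fin, nsmul_eq_mul]
  have hn' : (n : ℝ) ≠ 0 := by positivity
  field_simp
  constructor <;> intro h <;> linarith

/-- Feasibility condition for Sinkhorn DRO with Gaussian reference measure
`ν = N(m,Σ)`, squared Euclidean transport cost, and empirical center
`P̂_n = (1/n)Σᵢ δ_{ξ̂ᵢ}`: the dual feasibility inequality
`ρ + ε·E_{ξ∼P̂_n}[log E_{z∼ν}[e^{−‖ξ−z‖²/ε}]] ≥ 0` is equivalent to the
explicit lower bound on `ρ`. The inner Gaussian expectation is written as a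
Lebesgue integral against the Gaussian density. -/
theorem sinkhorn_feasibility_condition
    {s : ℕ} (S : Matrix (Fin s) (Fin s) ℝ) (hS : S.PosDef) (hSs : S.IsSymm)
    (m : Fin s → ℝ) (ε : ℝ) (hε : 0 < ε) (ρ : ℝ) (hρ : 0 ≤ ρ)
    (n : ℕ) (hn : 0 < n) (ξ : Fin n → Fin s → ℝ) :
    (0 ≤ ρ + ε * ((n : ℝ)⁻¹ * ∑ i : Fin n, Real.log
        (∫ z : Fin s → ℝ,
          Real.exp (-((ξ i - z) ⬝ᵥ (ξ i - z)) / ε) *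
            ((Real.sqrt ((2 * π) ^ s * S.det))⁻¹ *
              Real.exp (-(1/2) * ((z - m) ⬝ᵥ S⁻¹.mulVec (z - m))))))) ↔
    ((ε / 2) * Real.log ((S + (ε / 2) • (1 : Matrix (Fin s) (Fin s) ℝ)).det)
        - (ε * s / 2) * Real.log (ε / 2)
        + (ε / 2) * (m ⬝ᵥ S⁻¹.mulVec m)
        + (n : ℝ)⁻¹ * ∑ i : Fin n,
            ((ξ i ⬝ᵥ ξ i) -
              (ξ i + (ε / 2) • S⁻¹.mulVec m) ⬝ᵥ
                (((1 : Matrix (Fin s) (Fin s) ℝ) + (ε / 2) • S⁻¹)⁻¹).mulVec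
                  (ξ i + (ε / 2) • S⁻¹.mulVec m))
      ≤ ρ) :=
  sinkhorn_feasibility_condition_general S hS m ε hε ρ n hn ξ
end
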